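/- Fix a natural number k ≥ 1 and let T : SO(3) → (ℝ³)^{⊗k} be a continuous map, with components T_{i₁...i_k}(R), satisfying T_{i₁...i_k}(R R') = T_{i₁...i_k}(R) + R_{i₁ j₁} ⋯ R_{i_k j_k} T_{j₁...j_k}(R') for all R, R' ∈ SO(3). Then there exist constants c_{j₁...j_k} ∈ ℝ such that T_{i₁...i_k}(R) = (R_{i₁ j₁} ⋯ R_{i_k j_k} − δ_{i₁ j₁} ⋯ δ_{i_k j_k}) c_{j₁...j_k} for all R ∈ SO(3). -/

import Mathlib

/-! Averaging the cocycle identity `T (g * h) = T g + ρ g (T h)` over `h` against a left-invariant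
probability measure gives `∫ T = T g + ρ g (∫ T)`, so `c = -∫ T` exhibits `T` as a coboundary.
`SO(3)` is a compact group, so its normalized Haar measure is such a measure and continuous
cocycles are integrable. -/

/-- `SO(3)`: real orthogonal `3×3` matrices of determinant `1`. -/
def SO3 : Set (Matrix (Fin 3) (Fin 3) ℝ) :=
  {R | R * R.transpose = 1 ∧ R.det = 1}

open MeasureTheory Measure

theorem cocycle_eq_integral_sub {G E : Type*} [Group G] [MeasurableSpace G] [MeasurableMul G]
    [NormedAddCommGroup E] [NormedSpace ℝ E] [CompleteSpace E]
    (μ : Measure G) [IsProbabilityMeasure μ] [μ.IsMulLeftInvariant]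
    (ρ : G → E →L[ℝ] E) {T : G → E} (hT : Integrable T μ)
    (hcoc : ∀ g h, T (g * h) = T g + ρ g (T h)) (g : G) :
    T g = ∫ h, T h ∂μ - ρ g (∫ h, T h ∂μ) := by
  have htranslate : ∫ h, T (g * h) ∂μ = T g + ρ g (∫ h, T h ∂μ) := by
    simp_rw [hcoc]
    rw [integral_add (integrable_const _) ((ρ g).integrable_comp hT), integral_const,
      (ρ g).integral_comp_comm hT, probReal_univ, one_smul]
  rw [integral_mul_left_eq_self] at htranslate
  exact eq_sub_of_add_eq htranslate.symm

theorem exists_cocycle_eq_coboundary {G E : Type*} [Group G] [TopologicalSpace G]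
    [IsTopologicalGroup G] [CompactSpace G]
    [NormedAddCommGroup E] [NormedSpace ℝ E] [CompleteSpace E]
    (ρ : G → E →L[ℝ] E) {T : G → E} (hT : Continuous T)
    (hcoc : ∀ g h, T (g * h) = T g + ρ g (T h)) :
    ∃ c : E, ∀ g, T g = ρ g c - c := by
  borelize G
  have : IsProbabilityMeasure (haarMeasure ⊤ : Measure G) := ⟨haarMeasure_self⟩
  refine ⟨-∫ h, T h ∂haarMeasure ⊤, fun g => ?_⟩
  rw [cocycle_eq_integral_sub (haarMeasure ⊤) ρ
    (hT.integrable_of_hasCompactSupport (.of_compactSpace _)) hcoc g, map_neg]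
  abel

namespace Matrix

variable {n : Type*} [Fintype n] [DecidableEq n]

theorem isCompact_unitaryGroup {𝕜 : Type*} [RCLike 𝕜] :
    IsCompact (unitaryGroup n 𝕜 : Set (Matrix n n 𝕜)) := by
  refine (isCompact_univ_pi fun _ => isCompact_univ_pi fun _ =>
    isCompact_closedBall (0 : 𝕜) 1).of_isClosed_subset (isClosed_unitary (R := Matrix n n 𝕜)) ?_
  intro U hU i _ j _
  simpa using entry_norm_bound_of_unitary hU i j

theorem isClosed_specialUnitaryGroup {α : Type*} [CommRing α] [StarRing α] [TopologicalSpace α]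
    [IsTopologicalRing α] [ContinuousStar α] [T1Space α] :
    IsClosed (specialUnitaryGroup n α : Set (Matrix n n α)) :=
  (isClosed_unitary (R := Matrix n n α)).inter
    (isClosed_eq continuous_id.matrix_det continuous_const)

theorem isCompact_specialUnitaryGroup {𝕜 : Type*} [RCLike 𝕜] :
    IsCompact (specialUnitaryGroup n 𝕜 : Set (Matrix n n 𝕜)) :=
  isCompact_unitaryGroup.of_isClosed_subset isClosed_specialUnitaryGroup
    specialUnitaryGroup_le_unitaryGroup

instance {𝕜 : Type*} [RCLike 𝕜] : CompactSpace (specialUnitaryGroup n 𝕜) :=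
  isCompact_iff_compactSpace.mp isCompact_specialUnitaryGroup

instance {α : Type*} [CommRing α] [StarRing α] [TopologicalSpace α] [IsTopologicalRing α]
    [ContinuousStar α] : IsTopologicalGroup (specialUnitaryGroup n α) where
  continuous_inv := continuous_induced_rng.mpr continuous_subtype_val.star

end Matrix

theorem SO3_eq_specialOrthogonalGroup : SO3 = Matrix.specialOrthogonalGroup (Fin 3) ℝ := by
  ext R
  simp [SO3, Matrix.mem_specialOrthogonalGroup_iff, Matrix.mem_orthogonalGroup_iff]

theorem SO3_tensor_cocycle_is_coboundary (k : ℕ)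
    (T : Matrix (Fin 3) (Fin 3) ℝ → (Fin k → Fin 3) → ℝ)
    (hTcont : ContinuousOn T SO3)
    (hcoc : ∀ R ∈ SO3, ∀ R' ∈ SO3, ∀ idx : Fin k → Fin 3,
      T (R * R') idx =
        T R idx + ∑ jdx : Fin k → Fin 3, (∏ s, R (idx s) (jdx s)) * T R' jdx) :
    ∃ c : (Fin k → Fin 3) → ℝ, ∀ R ∈ SO3, ∀ idx : Fin k → Fin 3,
      T R idx = (∑ jdx : Fin k → Fin 3, (∏ s, R (idx s) (jdx s)) * c jdx) - c idx := by
  rw [SO3_eq_specialOrthogonalGroup] at hTcont hcoc ⊢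
  let ρ (R : Matrix.specialOrthogonalGroup (Fin 3) ℝ) :
      ((Fin k → Fin 3) → ℝ) →L[ℝ] ((Fin k → Fin 3) → ℝ) :=
    LinearMap.toContinuousLinearMap <| Matrix.mulVecLin fun idx jdx =>
      ∏ s, (R : Matrix (Fin 3) (Fin 3) ℝ) (idx s) (jdx s)
  obtain ⟨c, hc⟩ := exists_cocycle_eq_coboundary ρ
    (hTcont.comp_continuous continuous_subtype_val Subtype.prop)
    (fun R R' => funext (hcoc R R.2 R' R'.2))
  exact ⟨c, fun R hR => congrFun (hc ⟨R, hR⟩)⟩
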